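/- For all n ≥ 1, the number of triangulations of a convex (2n+1)-gon with vertices labeled 0, 1, ..., 2n that contain no diagonal {x, y} with x + y ≡ 1 (mod 2n+1) (i.e., no diagonal parallel to the side {0,1}) equals 2^{2n-1} * C_{n-1} - C_{2n-1}, where C_m denotes the m-th Catalan number. -/

import Mathlib

def IsPolygonDiagonal (m : ℕ) (e : ℕ × ℕ) : Prop :=
  e.1 < e.2 ∧ e.2 < m ∧ e.1 + 2 ≤ e.2 ∧ ¬(e.1 = 0 ∧ e.2 = m - 1)

def DiagonalsCross (e f : ℕ × ℕ) : Prop :=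
  (e.1 < f.1 ∧ f.1 < e.2 ∧ e.2 < f.2) ∨ (f.1 < e.1 ∧ e.1 < f.2 ∧ f.2 < e.2)

def IsTriangulation (m : ℕ) (T : Finset (ℕ × ℕ)) : Prop :=
  (∀ e ∈ T, IsPolygonDiagonal m e) ∧
  (∀ e ∈ T, ∀ f ∈ T, ¬ DiagonalsCross e f) ∧
  T.card = m - 3

/-!
The diagonals of the `(2n+1)`-gon parallel to the side `(0, 1)` are the nested chords
`(j, 2n + 2 - j)`, `2 ≤ j ≤ n`. Sorting all `C_{2n-1}` triangulations by the innermost such chord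
they contain and cutting along it gives `C_{2n-1} = ∑_{j=1}^{n} C_{2j-2} A_{n+1-j}`, where `A_m`
counts the triangulations of the `(2m+1)`-gon avoiding these chords: outside the cut lies an
unconstrained `2j`-gon, inside a `(2(n-j)+3)`-gon which, after a reflection, is again of the
original kind. With `E = ∑ C_{2k} xᵏ`, `O = ∑ C_{2k+1} xᵏ` and `A = ∑ A_{k+1} xᵏ` this reads
`E A = O`. Splitting `c = 1 + x c²` by parity gives `E = 1 + 2xEO` and `O = E² + xO²`, hence
`O + EO = 2E³` and `E² = c(4x)`, so `A = 2c(4x) - O`, i.e. `A_{k+1} = 2·4ᵏ C_k - C_{2k+1}`.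
-/

open Finset

lemma Finset.sum_range_two_mul {M : Type*} [AddCommMonoid M] (f : ℕ → M) (k : ℕ) :
    ∑ i ∈ range (2 * k), f i = ∑ i ∈ range k, (f (2 * i) + f (2 * i + 1)) := by
  induction k with
  | zero => simp
  | succ k ih => rw [mul_add, mul_one, sum_range_succ, sum_range_succ, sum_range_succ, ih]; abel

lemma catalan_succ_eq_sum_range (n : ℕ) :
    catalan (n + 1) = ∑ i ∈ range (n + 1), catalan i * catalan (n - i) := by
  rw [catalan_succ', Nat.sum_antidiagonal_eq_sum_range_succ_mk]

namespace PolygonTriangulation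

open scoped Classical

/-- A diagonal of the convex polygon whose vertices are the elements of `S` in increasing order. -/
def IsDiagonal (S : Finset ℕ) (e : ℕ × ℕ) : Prop :=
  e.1 ∈ S ∧ e.2 ∈ S ∧ e.1 < e.2 ∧ (∃ c ∈ S, e.1 < c ∧ c < e.2) ∧ ∃ c ∈ S, c < e.1 ∨ e.2 < c

def IsNoncrossing (S : Finset ℕ) (T : Finset (ℕ × ℕ)) : Prop :=
  (∀ e ∈ T, IsDiagonal S e) ∧ ∀ e ∈ T, ∀ f ∈ T, ¬DiagonalsCross e f

def IsTriangulationOn (S : Finset ℕ) (T : Finset (ℕ × ℕ)) : Prop :=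
  IsNoncrossing S T ∧ T.card = S.card - 3

noncomputable def triangulations (S : Finset ℕ) (P : ℕ × ℕ → Prop) : Finset (Finset (ℕ × ℕ)) :=
  (S ×ˢ S).powerset.filter fun T => IsTriangulationOn S T ∧ ∀ e ∈ T, P e

variable {S S' : Finset ℕ}

lemma mem_triangulations {P : ℕ × ℕ → Prop} {T : Finset (ℕ × ℕ)} :
    T ∈ triangulations S P ↔ IsTriangulationOn S T ∧ ∀ e ∈ T, P e := by
  rw [triangulations, mem_filter, mem_powerset, and_iff_right_iff_imp]
  rintro ⟨⟨⟨hdiag, -⟩, -⟩, -⟩ e he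
  exact mem_product.mpr ⟨(hdiag e he).1, (hdiag e he).2.1⟩

lemma triangulations_congr {P Q : ℕ × ℕ → Prop}
    (h : ∀ e, IsDiagonal S e → (P e ↔ Q e)) : triangulations S P = triangulations S Q := by
  ext T
  simp only [mem_triangulations]
  exact and_congr_right fun hT => forall₂_congr fun e he => h e (hT.1.1 e he)

lemma card_triangulations_of_card_le_three (P : ℕ × ℕ → Prop)
    (h : S.card ≤ 3) : (triangulations S P).card = 1 := by
  rw [card_eq_one]
  refine ⟨∅, eq_singleton_iff_unique_mem.mpr ⟨?_, fun T hT => ?_⟩⟩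
  · simp [mem_triangulations, IsTriangulationOn, IsNoncrossing]
    omega
  · exact card_eq_zero.mp (by have := (mem_triangulations.mp hT).1.2; omega)

lemma filter_triangulations_congr {P : ℕ × ℕ → Prop}
    {p q : Finset (ℕ × ℕ) → Prop} [DecidablePred p] [DecidablePred q]
    (h : ∀ T, IsTriangulationOn S T → (p T ↔ q T)) :
    (triangulations S P).filter p = (triangulations S P).filter q :=
  filter_congr fun T hT => h T (mem_triangulations.mp hT).1

lemma not_diagonalsCross_self (e : ℕ × ℕ) : ¬DiagonalsCross e e := by
  simp only [DiagonalsCross]; omega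

lemma IsDiagonal.mono {e : ℕ × ℕ} (h : S ⊆ S') (he : IsDiagonal S e) :
    IsDiagonal S' e := by
  obtain ⟨h1, h2, h12, ⟨c, hc, hc'⟩, ⟨c', hc2, hc2'⟩⟩ := he
  exact ⟨h h1, h h2, h12, ⟨c, h hc, hc'⟩, ⟨c', h hc2, hc2'⟩⟩

lemma IsDiagonal.four_le_card {e : ℕ × ℕ} (he : IsDiagonal S e) : 4 ≤ S.card := by
  obtain ⟨h1, h2, h12, ⟨c, hc, hc1, hc2⟩, ⟨c', hc', hcc⟩⟩ := he
  calc 4 = ({e.1, e.2, c, c'} : Finset ℕ).card := by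
        rw [card_insert_of_notMem (by simp; omega), card_insert_of_notMem (by simp; omega),
          card_insert_of_notMem (by simp; omega), card_singleton]
    _ ≤ S.card := card_le_card (by simp [insert_subset_iff, *])

lemma IsNoncrossing.mono {T : Finset (ℕ × ℕ)} (h : S ⊆ S')
    (hT : IsNoncrossing S T) : IsNoncrossing S' T :=
  ⟨fun e he => (hT.1 e he).mono h, hT.2⟩

lemma IsNoncrossing.union {T₁ T₂ : Finset (ℕ × ℕ)} (h₁ : IsNoncrossing S T₁)
    (h₂ : IsNoncrossing S T₂)
    (h : ∀ e ∈ T₁, ∀ f ∈ T₂, ¬DiagonalsCross e f ∧ ¬DiagonalsCross f e) :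
    IsNoncrossing S (T₁ ∪ T₂) := by
  refine ⟨fun e he => (mem_union.mp he).elim (h₁.1 e) (h₂.1 e), fun e he f hf => ?_⟩
  rcases mem_union.mp he with he | he <;> rcases mem_union.mp hf with hf | hf
  exacts [h₁.2 e he f hf, (h e he f hf).1, (h f hf e he).2, h₂.2 e he f hf]

lemma IsNoncrossing.insert {T : Finset (ℕ × ℕ)} {d : ℕ × ℕ}
    (hT : IsNoncrossing S T) (hd : IsDiagonal S d)
    (h : ∀ e ∈ T, ¬DiagonalsCross d e ∧ ¬DiagonalsCross e d) : IsNoncrossing S (insert d T) := by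
  rw [insert_eq]
  refine IsNoncrossing.union ⟨by simpa using hd, by simpa using not_diagonalsCross_self d⟩ hT ?_
  simpa using h

def inner (S : Finset ℕ) (a b : ℕ) : Finset ℕ := S.filter fun x => a ≤ x ∧ x ≤ b

def outer (S : Finset ℕ) (a b : ℕ) : Finset ℕ := S.filter fun x => x ≤ a ∨ b ≤ x

def innerDiags (a b : ℕ) (T : Finset (ℕ × ℕ)) : Finset (ℕ × ℕ) :=
  (T.erase (a, b)).filter fun e => a ≤ e.1 ∧ e.2 ≤ b

def outerDiags (a b : ℕ) (T : Finset (ℕ × ℕ)) : Finset (ℕ × ℕ) :=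
  (T.erase (a, b)).filter fun e => ¬(a ≤ e.1 ∧ e.2 ≤ b)

section Cut

variable {a b : ℕ} {T T₁ T₂ : Finset (ℕ × ℕ)}

lemma IsDiagonal.card_inner_add_card_outer (hd : IsDiagonal S (a, b)) :
    (inner S a b).card + (outer S a b).card = S.card + 2 := by
  obtain ⟨ha, hb, hab, -, -⟩ := hd
  have hunion : inner S a b ∪ outer S a b = S := by
    ext x; simp only [inner, outer, mem_union, mem_filter]
    constructor
    · rintro (⟨h, -⟩ | ⟨h, -⟩) <;> exact h
    · intro h; by_cases hx : a ≤ x ∧ x ≤ b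
      · exact Or.inl ⟨h, hx⟩
      · exact Or.inr ⟨h, by omega⟩
  have hinter : inner S a b ∩ outer S a b = {a, b} := by
    ext x; simp only [inner, outer, mem_inter, mem_filter, mem_insert, mem_singleton]
    constructor
    · omega
    · rintro (rfl | rfl)
      · exact ⟨⟨ha, le_rfl, hab.le⟩, ⟨ha, Or.inl le_rfl⟩⟩
      · exact ⟨⟨hb, hab.le, le_rfl⟩, ⟨hb, Or.inr le_rfl⟩⟩
  have hab' : ({a, b} : Finset ℕ).card = 2 := card_pair hab.ne
  rw [← card_union_add_card_inter, hunion, hinter, hab']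

lemma IsDiagonal.three_le_card_inner (hd : IsDiagonal S (a, b)) : 3 ≤ (inner S a b).card := by
  obtain ⟨ha, hb, hab, ⟨c, hc, hc1, hc2⟩, -⟩ := hd
  calc 3 = ({a, c, b} : Finset ℕ).card := by
        rw [card_insert_of_notMem (by simp; omega), card_pair (by omega)]
    _ ≤ _ := card_le_card (by simp [insert_subset_iff, inner, *]; omega)

lemma IsDiagonal.three_le_card_outer (hd : IsDiagonal S (a, b)) : 3 ≤ (outer S a b).card := by
  obtain ⟨ha, hb, hab, -, ⟨c, hc, hc'⟩⟩ := hd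
  calc 3 = ({a, b, c} : Finset ℕ).card := by
        rw [card_insert_of_notMem (by simp; omega), card_pair (by omega)]
    _ ≤ _ := card_le_card (by simp [insert_subset_iff, outer, *]; omega)

lemma IsDiagonal.isDiagonal_inner (hd : IsDiagonal S (a, b)) {e : ℕ × ℕ} (he : IsDiagonal S e)
    (h1 : a ≤ e.1) (h2 : e.2 ≤ b) (hne : e ≠ (a, b)) : IsDiagonal (inner S a b) e := by
  obtain ⟨ha, hb, -, -, -⟩ := hd
  obtain ⟨hx, hy, hxy, ⟨c, hc, hc1, hc2⟩, -⟩ := he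
  have hne' : a < e.1 ∨ e.2 < b := by
    by_contra! h; exact hne (Prod.ext (by omega) (by omega))
  refine ⟨by simp [inner, hx]; omega, by simp [inner, hy]; omega, hxy,
    ⟨c, by simp [inner, hc]; omega, hc1, hc2⟩, ?_⟩
  rcases hne' with h | h
  · exact ⟨a, by simp [inner, ha]; omega, by omega⟩
  · exact ⟨b, by simp [inner, hb]; omega, by omega⟩

lemma IsDiagonal.isDiagonal_outer (hd : IsDiagonal S (a, b)) {e : ℕ × ℕ} (he : IsDiagonal S e)
    (h1 : e.1 ≤ a ∨ b ≤ e.1) (h2 : e.2 ≤ a ∨ b ≤ e.2) (hne : e ≠ (a, b)) :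
    IsDiagonal (outer S a b) e := by
  obtain ⟨ha, hb, hab, -, -⟩ := hd
  obtain ⟨hx, hy, hxy, ⟨c, hc, hc1, hc2⟩, ⟨c', hc', hcc'⟩⟩ := he
  have hne' : ¬(e.1 = a ∧ e.2 = b) := fun h => hne (Prod.ext h.1 h.2)
  refine ⟨by simp [outer, hx]; omega, by simp [outer, hy]; omega, hxy, ?_, ?_⟩
  · by_cases hab' : e.1 ≤ a ∧ b ≤ e.2
    · by_cases hea : e.1 = a
      · exact ⟨b, by simp [outer, hb], by omega, by omega⟩
      · exact ⟨a, by simp [outer, ha], by omega, by omega⟩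
    · exact ⟨c, by simp [outer, hc]; omega, hc1, hc2⟩
  · by_cases hab' : e.1 ≤ a ∧ b ≤ e.2
    · exact ⟨c', by simp [outer, hc']; omega, hcc'⟩
    · by_cases hea : e.2 ≤ a
      · exact ⟨b, by simp [outer, hb], by omega⟩
      · exact ⟨a, by simp [outer, ha], by omega⟩

lemma IsDiagonal.of_inner {e : ℕ × ℕ} (he : IsDiagonal (inner S a b) e) :
    (a ≤ e.1 ∧ e.2 ≤ b) ∧ e ≠ (a, b) := by
  obtain ⟨h1, h2, -, -, ⟨c, hc, hc'⟩⟩ := he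
  simp only [inner, mem_filter] at h1 h2 hc
  exact ⟨⟨h1.2.1, h2.2.2⟩, fun h => by subst h; dsimp only at hc' h1 h2 hc; omega⟩

lemma IsDiagonal.of_outer {e : ℕ × ℕ} (he : IsDiagonal (outer S a b) e) :
    ((e.1 ≤ a ∨ b ≤ e.1) ∧ (e.2 ≤ a ∨ b ≤ e.2)) ∧ ¬(a ≤ e.1 ∧ e.2 ≤ b) := by
  obtain ⟨h1, h2, h12, ⟨c, hc, hc'⟩, -⟩ := he
  simp only [outer, mem_filter] at h1 h2 hc
  exact ⟨⟨h1.2, h2.2⟩, by omega⟩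

/-- `(a, b)` itself satisfies both `he` and `hf`. -/
lemma not_diagonalsCross_of_inside_of_outside {e f : ℕ × ℕ} (he : a ≤ e.1 ∧ e.2 ≤ b)
    (hf : (f.1 ≤ a ∨ b ≤ f.1) ∧ (f.2 ≤ a ∨ b ≤ f.2)) (he' : e.1 < e.2) :
    ¬DiagonalsCross e f ∧ ¬DiagonalsCross f e := by
  simp only [DiagonalsCross]; omega

lemma mem_innerDiags {e : ℕ × ℕ} :
    e ∈ innerDiags a b T ↔ e ≠ (a, b) ∧ e ∈ T ∧ a ≤ e.1 ∧ e.2 ≤ b := by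
  rw [innerDiags, mem_filter, mem_erase, and_assoc]

lemma mem_outerDiags {e : ℕ × ℕ} :
    e ∈ outerDiags a b T ↔ e ≠ (a, b) ∧ e ∈ T ∧ ¬(a ≤ e.1 ∧ e.2 ≤ b) := by
  rw [outerDiags, mem_filter, mem_erase, and_assoc]

lemma card_innerDiags_add_card_outerDiags (hd : (a, b) ∈ T) :
    (innerDiags a b T).card + (outerDiags a b T).card + 1 = T.card := by
  rw [innerDiags, outerDiags, card_filter_add_card_filter_not, card_erase_add_one hd]

lemma IsNoncrossing.innerDiags (hT : IsNoncrossing S T) (hd : (a, b) ∈ T) :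
    IsNoncrossing (inner S a b) (innerDiags a b T) := by
  refine ⟨fun e he => ?_, fun e he f hf => hT.2 e (mem_innerDiags.mp he).2.1 f
    (mem_innerDiags.mp hf).2.1⟩
  obtain ⟨hne, heT, h1, h2⟩ := mem_innerDiags.mp he
  exact (hT.1 _ hd).isDiagonal_inner (hT.1 e heT) h1 h2 hne

lemma IsNoncrossing.outerDiags (hT : IsNoncrossing S T) (hd : (a, b) ∈ T) :
    IsNoncrossing (outer S a b) (outerDiags a b T) := by
  refine ⟨fun e he => ?_, fun e he f hf => hT.2 e (mem_outerDiags.mp he).2.1 f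
    (mem_outerDiags.mp hf).2.1⟩
  obtain ⟨hne, heT, hout⟩ := mem_outerDiags.mp he
  have hcross := hT.2 _ hd e heT
  have he' := (hT.1 e heT).2.2.1
  simp only [DiagonalsCross] at hcross
  exact (hT.1 _ hd).isDiagonal_outer (hT.1 e heT) (by omega) (by omega) hne

theorem IsNoncrossing.card_le (hT : IsNoncrossing S T) : T.card ≤ S.card - 3 := by
  induction hS : S.card using Nat.strong_induction_on generalizing S T with
  | _ N ih =>
  obtain rfl | ⟨⟨a, b⟩, hd⟩ := T.eq_empty_or_nonempty
  · simp
  have hdiag := hT.1 _ hd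
  have h3i := hdiag.three_le_card_inner
  have h3o := hdiag.three_le_card_outer
  have hsum := hdiag.card_inner_add_card_outer
  have hi := ih _ (by omega) (hT.innerDiags hd) rfl
  have ho := ih _ (by omega) (hT.outerDiags hd) rfl
  have := card_innerDiags_add_card_outerDiags hd
  omega

lemma IsTriangulationOn.innerDiags_outerDiags (hT : IsTriangulationOn S T) (hd : (a, b) ∈ T) :
    IsTriangulationOn (inner S a b) (innerDiags a b T) ∧
      IsTriangulationOn (outer S a b) (outerDiags a b T) := by
  have hdiag := hT.1.1 _ hd
  have h3i := hdiag.three_le_card_inner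
  have h3o := hdiag.three_le_card_outer
  have hsum := hdiag.card_inner_add_card_outer
  have hi := (hT.1.innerDiags hd).card_le
  have ho := (hT.1.outerDiags hd).card_le
  have := card_innerDiags_add_card_outerDiags hd
  have := hT.2
  exact ⟨⟨hT.1.innerDiags hd, by omega⟩, ⟨hT.1.outerDiags hd, by omega⟩⟩

lemma IsTriangulationOn.exists_diagonalsCross (hT : IsTriangulationOn S T) {d : ℕ × ℕ}
    (hd : IsDiagonal S d) (hdT : d ∉ T) : ∃ e ∈ T, DiagonalsCross d e ∨ DiagonalsCross e d := by
  by_contra! hcon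
  have hnc := hT.1.insert hd hcon
  have := hnc.card_le
  rw [card_insert_of_notMem hdT, hT.2] at this
  have := hd.four_le_card
  omega

lemma innerDiags_subset : innerDiags a b T ⊆ T := fun _ he => (mem_innerDiags.mp he).2.1

lemma outerDiags_subset : outerDiags a b T ⊆ T := fun _ he => (mem_outerDiags.mp he).2.1

lemma insert_innerDiags_union_outerDiags (hd : (a, b) ∈ T) :
    insert (a, b) (innerDiags a b T ∪ outerDiags a b T) = T := by
  rw [innerDiags, outerDiags, filter_union_filter_not_eq, insert_erase hd]

lemma innerDiags_insert_union (h₁ : ∀ e ∈ T₁, IsDiagonal (inner S a b) e)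
    (h₂ : ∀ e ∈ T₂, IsDiagonal (outer S a b) e) :
    innerDiags a b (insert (a, b) (T₁ ∪ T₂)) = T₁ := by
  ext e
  rw [mem_innerDiags, mem_insert, mem_union]
  constructor
  · rintro ⟨hne, he | he | he, hin⟩
    exacts [absurd he hne, he, absurd hin (h₂ e he).of_outer.2]
  · intro he
    exact ⟨(h₁ e he).of_inner.2, Or.inr (Or.inl he), (h₁ e he).of_inner.1⟩

lemma outerDiags_insert_union (h₁ : ∀ e ∈ T₁, IsDiagonal (inner S a b) e)
    (h₂ : ∀ e ∈ T₂, IsDiagonal (outer S a b) e) :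
    outerDiags a b (insert (a, b) (T₁ ∪ T₂)) = T₂ := by
  ext e
  rw [mem_outerDiags, mem_insert, mem_union]
  constructor
  · rintro ⟨hne, he | he | he, hout⟩
    exacts [absurd he hne, absurd (h₁ e he).of_inner.1 hout, he]
  · intro he
    refine ⟨fun h => (h₂ e he).of_outer.2 ?_, Or.inr (Or.inr he), (h₂ e he).of_outer.2⟩
    rw [h]; exact ⟨le_rfl, le_rfl⟩

lemma IsDiagonal.isNoncrossing_insert_union (hd : IsDiagonal S (a, b))
    (h₁ : IsNoncrossing (inner S a b) T₁) (h₂ : IsNoncrossing (outer S a b) T₂) :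
    IsNoncrossing S (insert (a, b) (T₁ ∪ T₂)) := by
  have hin : ∀ e ∈ T₁, (a ≤ e.1 ∧ e.2 ≤ b) ∧ e.1 < e.2 := fun e he =>
    ⟨(h₁.1 e he).of_inner.1, (h₁.1 e he).2.2.1⟩
  have hout : ∀ e ∈ T₂, (e.1 ≤ a ∨ b ≤ e.1) ∧ (e.2 ≤ a ∨ b ≤ e.2) := fun e he =>
    (h₂.1 e he).of_outer.1
  refine ((h₁.mono (filter_subset _ _)).union (h₂.mono (filter_subset _ _)) fun e he f hf =>
    not_diagonalsCross_of_inside_of_outside (hin e he).1 (hout f hf) (hin e he).2).insert hd ?_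
  intro e he
  rcases mem_union.mp he with he | he
  · exact (not_diagonalsCross_of_inside_of_outside (hin e he).1
      ⟨Or.inl le_rfl, Or.inr le_rfl⟩ (hin e he).2).symm
  · exact not_diagonalsCross_of_inside_of_outside ⟨le_rfl, le_rfl⟩ (hout e he) hd.2.2.1

lemma IsDiagonal.isTriangulationOn_insert_union (hd : IsDiagonal S (a, b))
    (h₁ : IsTriangulationOn (inner S a b) T₁) (h₂ : IsTriangulationOn (outer S a b) T₂) :
    IsTriangulationOn S (insert (a, b) (T₁ ∪ T₂)) := by
  have hdisj : Disjoint T₁ T₂ := disjoint_left.mpr fun e he₁ he₂ =>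
    (h₂.1.1 e he₂).of_outer.2 (h₁.1.1 e he₁).of_inner.1
  have hnotin : (a, b) ∉ T₁ ∪ T₂ := by
    rw [mem_union, not_or]
    exact ⟨fun h => (h₁.1.1 _ h).of_inner.2 rfl,
      fun h => (h₂.1.1 _ h).of_outer.2 ⟨le_rfl, le_rfl⟩⟩
  refine ⟨hd.isNoncrossing_insert_union h₁.1 h₂.1, ?_⟩
  rw [card_insert_of_notMem hnotin, card_union_of_disjoint hdisj, h₁.2, h₂.2]
  have := hd.card_inner_add_card_outer
  have := hd.three_le_card_inner
  have := hd.three_le_card_outer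
  omega

theorem IsDiagonal.card_triangulations_filter_mem_and (hd : IsDiagonal S (a, b))
    {P : ℕ × ℕ → Prop} (hP : P (a, b)) (Q : Finset (ℕ × ℕ) → Prop) [DecidablePred Q] :
    ((triangulations S P).filter fun T => (a, b) ∈ T ∧ Q (outerDiags a b T)).card =
      (triangulations (inner S a b) P).card *
        ((triangulations (outer S a b) P).filter Q).card := by
  rw [← card_product]
  refine card_bij' (fun T _ => (innerDiags a b T, outerDiags a b T))
    (fun p _ => insert (a, b) (p.1 ∪ p.2)) ?_ ?_ ?_ ?_
  · intro T hT
    simp only [mem_filter, mem_triangulations] at hT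
    obtain ⟨⟨hT, hPT⟩, hdT, hQ⟩ := hT
    have hparts := hT.innerDiags_outerDiags hdT
    simp only [mem_product, mem_filter, mem_triangulations]
    exact ⟨⟨hparts.1, fun e he => hPT e (innerDiags_subset he)⟩,
      ⟨hparts.2, fun e he => hPT e (outerDiags_subset he)⟩, hQ⟩
  · rintro ⟨T₁, T₂⟩ hp
    simp only [mem_product, mem_filter, mem_triangulations] at hp
    obtain ⟨⟨h₁, hP₁⟩, ⟨h₂, hP₂⟩, hQ⟩ := hp
    simp only [mem_filter, mem_triangulations]
    refine ⟨⟨hd.isTriangulationOn_insert_union h₁ h₂, fun e he => ?_⟩, mem_insert_self _ _,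
      by rwa [outerDiags_insert_union h₁.1.1 h₂.1.1]⟩
    rcases mem_insert.mp he with rfl | he
    · exact hP
    rcases mem_union.mp he with he | he
    exacts [hP₁ e he, hP₂ e he]
  · intro T hT
    exact insert_innerDiags_union_outerDiags (mem_filter.mp hT).2.1
  · rintro ⟨T₁, T₂⟩ hp
    simp only [mem_product, mem_filter, mem_triangulations] at hp
    exact Prod.ext (innerDiags_insert_union hp.1.1.1.1 hp.2.1.1.1.1)
      (outerDiags_insert_union hp.1.1.1.1 hp.2.1.1.1.1)

theorem IsDiagonal.card_triangulations_filter_mem (hd : IsDiagonal S (a, b))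
    {P : ℕ × ℕ → Prop} (hP : P (a, b)) :
    ((triangulations S P).filter fun T => (a, b) ∈ T).card =
      (triangulations (inner S a b) P).card * (triangulations (outer S a b) P).card := by
  simpa using hd.card_triangulations_filter_mem_and hP fun _ => True

end Cut

section Relabel

lemma image_mem_triangulations (φ ψ : ℕ × ℕ → ℕ × ℕ)
    (hφ : ∀ e, IsDiagonal S e → IsDiagonal S' (φ e)) (hψφ : ∀ e, IsDiagonal S e → ψ (φ e) = e)
    (hcross : ∀ e f, IsDiagonal S e → IsDiagonal S f →
      DiagonalsCross (φ e) (φ f) → DiagonalsCross e f)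
    (hcard : S'.card = S.card) {P Q : ℕ × ℕ → Prop} (hPQ : ∀ e, IsDiagonal S e → P e → Q (φ e))
    {T : Finset (ℕ × ℕ)} (hT : T ∈ triangulations S P) : T.image φ ∈ triangulations S' Q := by
  obtain ⟨⟨⟨hdiag, hnc⟩, hcardT⟩, hP⟩ := mem_triangulations.mp hT
  have hinj : Set.InjOn φ T := fun e he f hf h => by
    rw [← hψφ e (hdiag e he), h, hψφ f (hdiag f hf)]
  refine mem_triangulations.mpr ⟨⟨⟨?_, ?_⟩, ?_⟩, ?_⟩
  · simp only [mem_image]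
    rintro _ ⟨e, he, rfl⟩
    exact hφ e (hdiag e he)
  · simp only [mem_image]
    rintro _ ⟨e, he, rfl⟩ _ ⟨f, hf, rfl⟩ h
    exact hnc e he f hf (hcross e f (hdiag e he) (hdiag f hf) h)
  · rw [card_image_of_injOn hinj, hcardT, hcard]
  · simp only [mem_image]
    rintro _ ⟨e, he, rfl⟩
    exact hPQ e (hdiag e he) (hP e he)

lemma image_image_of_mem_triangulations (φ ψ : ℕ × ℕ → ℕ × ℕ)
    (hψφ : ∀ e, IsDiagonal S e → ψ (φ e) = e) {P : ℕ × ℕ → Prop} {T : Finset (ℕ × ℕ)}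
    (hT : T ∈ triangulations S P) : (T.image φ).image ψ = T := by
  rw [image_image]
  conv_rhs => rw [← image_id (s := T)]
  exact image_congr fun e he => hψφ e ((mem_triangulations.mp hT).1.1.1 e he)

theorem card_triangulations_comp (φ ψ : ℕ × ℕ → ℕ × ℕ)
    (hφ : ∀ e, IsDiagonal S e → IsDiagonal S' (φ e))
    (hψ : ∀ e, IsDiagonal S' e → IsDiagonal S (ψ e))
    (hψφ : ∀ e, IsDiagonal S e → ψ (φ e) = e) (hφψ : ∀ e, IsDiagonal S' e → φ (ψ e) = e)
    (hcross : ∀ e f, IsDiagonal S e → IsDiagonal S f →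
      (DiagonalsCross (φ e) (φ f) ↔ DiagonalsCross e f))
    (hcard : S'.card = S.card) (P : ℕ × ℕ → Prop) :
    (triangulations S fun e => P (φ e)).card = (triangulations S' P).card := by
  have hcross' : ∀ e f, IsDiagonal S' e → IsDiagonal S' f →
      DiagonalsCross (ψ e) (ψ f) → DiagonalsCross e f := fun e f he hf h => by
    rwa [← hcross _ _ (hψ e he) (hψ f hf), hφψ e he, hφψ f hf] at h
  refine card_bij' (fun T _ => T.image φ) (fun T _ => T.image ψ)
    (fun T hT => image_mem_triangulations φ ψ hφ hψφ
      (fun e f he hf => (hcross e f he hf).mp) hcard (fun _ _ h => h) hT)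
    (fun T hT => image_mem_triangulations ψ φ hψ hφψ hcross' hcard.symm
      (fun e he h => by rwa [hφψ e he]) hT)
    (fun T hT => image_image_of_mem_triangulations φ ψ hψφ hT)
    (fun T hT => image_image_of_mem_triangulations ψ φ hφψ hT)

lemma IsDiagonal.map {g : ℕ → ℕ} (hg : Set.MapsTo g S S')
    (hlt : ∀ x ∈ S, ∀ y ∈ S, g x < g y ↔ x < y) {e : ℕ × ℕ} (he : IsDiagonal S e) :
    IsDiagonal S' (g e.1, g e.2) := by
  obtain ⟨h1, h2, h12, ⟨c, hc, hc1, hc2⟩, ⟨c', hc', hcc'⟩⟩ := he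
  refine ⟨hg h1, hg h2, (hlt _ h1 _ h2).mpr h12,
    ⟨g c, hg hc, (hlt _ h1 _ hc).mpr hc1, (hlt _ hc _ h2).mpr hc2⟩, ⟨g c', hg hc', ?_⟩⟩
  rw [hlt _ hc' _ h1, hlt _ h2 _ hc']
  exact hcc'

theorem card_triangulations_relabel (g g' : ℕ → ℕ) (hg : Set.MapsTo g S S')
    (hg' : Set.MapsTo g' S' S) (hg'g : ∀ x ∈ S, g' (g x) = x) (hgg' : ∀ y ∈ S', g (g' y) = y)
    (hmono : StrictMonoOn g S) (P : ℕ × ℕ → Prop) :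
    (triangulations S fun e => P (g e.1, g e.2)).card = (triangulations S' P).card := by
  have hlt : ∀ x ∈ S, ∀ y ∈ S, g x < g y ↔ x < y := fun x hx y hy => hmono.lt_iff_lt hx hy
  have hlt' : ∀ x ∈ S', ∀ y ∈ S', g' x < g' y ↔ x < y := fun x hx y hy => by
    rw [← hlt _ (hg' hx) _ (hg' hy), hgg' x hx, hgg' y hy]
  have hcard : S'.card = S.card := (card_nbij' g g' hg hg' hg'g hgg').symm
  refine card_triangulations_comp (fun e => (g e.1, g e.2)) (fun e => (g' e.1, g' e.2))
    (fun e he => he.map hg hlt) (fun e he => he.map hg' hlt') (fun e he => ?_) (fun e he => ?_)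
    (fun e f he hf => ?_) hcard P
  · rw [hg'g _ he.1, hg'g _ he.2.1]
  · rw [hgg' _ he.1, hgg' _ he.2.1]
  · simp only [DiagonalsCross]
    rw [hlt _ he.1 _ hf.1, hlt _ hf.1 _ he.2.1, hlt _ he.2.1 _ hf.2.1, hlt _ hf.1 _ he.1,
      hlt _ he.1 _ hf.2.1, hlt _ hf.2.1 _ he.2.1]

end Relabel

section Standard

lemma isDiagonal_range_iff {m : ℕ} {e : ℕ × ℕ} :
    IsDiagonal (range m) e ↔ IsPolygonDiagonal m e := by
  simp only [IsDiagonal, IsPolygonDiagonal, mem_range]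
  constructor
  · rintro ⟨-, h2, h12, ⟨c, -, hc1, hc2⟩, ⟨c', hc', hcc'⟩⟩
    omega
  · rintro ⟨h12, h2, h12', hne⟩
    refine ⟨by omega, h2, h12, ⟨e.1 + 1, by omega, by omega, by omega⟩, ?_⟩
    rcases Nat.eq_zero_or_pos e.1 with h | h
    exacts [⟨m - 1, by omega, by omega⟩, ⟨0, by omega, by omega⟩]

lemma isTriangulation_iff_isTriangulationOn {m : ℕ} {T : Finset (ℕ × ℕ)} :
    IsTriangulation m T ↔ IsTriangulationOn (range m) T := by
  simp only [IsTriangulation, IsTriangulationOn, IsNoncrossing, isDiagonal_range_iff, card_range,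
    and_assoc]

lemma isDiagonal_Icc_iff {a b : ℕ} {e : ℕ × ℕ} :
    IsDiagonal (Icc a b) e ↔ a ≤ e.1 ∧ e.1 + 2 ≤ e.2 ∧ e.2 ≤ b ∧ ¬(e.1 = a ∧ e.2 = b) := by
  simp only [IsDiagonal, mem_Icc]
  constructor
  · rintro ⟨h1, h2, -, ⟨c, -, hc1, hc2⟩, ⟨c', hc', hcc'⟩⟩
    omega
  · rintro ⟨h1, h12, h2, hne⟩
    refine ⟨by omega, by omega, by omega, ⟨e.1 + 1, by omega, by omega, by omega⟩, ?_⟩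
    rcases eq_or_lt_of_le h1 with h | h
    exacts [⟨b, by omega, by omega⟩, ⟨a, by omega, by omega⟩]

theorem card_triangulations_Icc (a b : ℕ) (hab : a ≤ b) (P : ℕ × ℕ → Prop) :
    (triangulations (Icc a b) fun e => P (e.1 - a, e.2 - a)).card =
      (triangulations (range (b + 1 - a)) P).card := by
  refine card_triangulations_relabel (· - a) (· + a) (fun x hx => ?_) (fun y hy => ?_)
    (fun x hx => ?_) (fun y hy => ?_) (fun x hx y hy hxy => ?_) P <;>
    simp only [coe_Icc, coe_range, Set.mem_Icc, Set.mem_Iio, mem_Icc, mem_range] at * <;> omega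

/-- The reflection `i ↦ -i` of the vertices `ZMod M`, on diagonals written with increasing ends. -/
def reflect (M : ℕ) (e : ℕ × ℕ) : ℕ × ℕ :=
  if e.1 = 0 then (0, M - e.2) else (M - e.2, M - e.1)

theorem card_triangulations_reflect (M : ℕ) (P : ℕ × ℕ → Prop) :
    (triangulations (range M) fun e => P (reflect M e)).card =
      (triangulations (range M) P).card := by
  have hdiag : ∀ e, IsDiagonal (range M) e → IsDiagonal (range M) (reflect M e) := by
    intro e he
    rw [isDiagonal_range_iff, IsPolygonDiagonal] at he ⊢
    unfold reflect
    split_ifs <;> dsimp only <;> omega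
  have hinv : ∀ e, IsDiagonal (range M) e → reflect M (reflect M e) = e := by
    intro e he
    rw [isDiagonal_range_iff, IsPolygonDiagonal] at he
    unfold reflect
    split_ifs <;> ext <;> dsimp only at * <;> omega
  refine card_triangulations_comp (reflect M) (reflect M) hdiag hdiag hinv hinv
    (fun e f he hf => ?_) rfl P
  rw [isDiagonal_range_iff, IsPolygonDiagonal] at he hf
  unfold reflect DiagonalsCross
  split_ifs <;> dsimp only <;> omega

end Standard

section Catalan

noncomputable def numTriangulations (m : ℕ) : ℕ := (triangulations (range m) fun _ => True).card

lemma card_triangulations_Icc_true (a b : ℕ) (hab : a ≤ b) :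
    (triangulations (Icc a b) fun _ => True).card = numTriangulations (b + 1 - a) :=
  card_triangulations_Icc a b hab fun _ => True

lemma numTriangulations_of_le_three {m : ℕ} (hm : m ≤ 3) : numTriangulations m = 1 :=
  card_triangulations_of_card_le_three _ (by simpa using hm)

lemma inner_range {M a b : ℕ} (hb : b < M) : inner (range M) a b = Icc a b := by
  ext; simp only [inner, mem_filter, mem_range, mem_Icc]; omega

lemma card_triangulations_outer_range {M a b : ℕ} (hab : a < b) (hb : b < M) :
    (triangulations (outer (range M) a b) fun _ => True).card =
      numTriangulations (M + a + 1 - b) := by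
  refine card_triangulations_relabel (S' := range (M + a + 1 - b))
    (fun x => if x ≤ a then x else x - (b - a - 1)) (fun y => if y ≤ a then y else y + (b - a - 1))
    (fun x hx => ?_) (fun y hy => ?_) (fun x hx => ?_) (fun y hy => ?_)
    (fun x hx y hy hxy => ?_) fun _ => True <;>
    simp only [outer, coe_filter, Set.mem_ofPred_eq, mem_coe, mem_filter, mem_range] at * <;>
    split_ifs <;> omega

/-- The third vertex of the triangle of `T` on the side `(0, M - 1)`: the last neighbour of `0`
before `M - 1`. -/
def apex (M : ℕ) (T : Finset (ℕ × ℕ)) : ℕ :=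
  Nat.findGreatest (fun v => v = 1 ∨ (0, v) ∈ T) (M - 2)

lemma apex_eq_iff {M : ℕ} {T : Finset (ℕ × ℕ)} (hT : IsTriangulationOn (range M) T) {v : ℕ}
    (hv : 1 ≤ v) (hvM : v ≤ M - 2) :
    apex M T = v ↔ (v = 1 ∨ (0, v) ∈ T) ∧ (v = M - 2 ∨ (v, M - 1) ∈ T) := by
  have hdiag : ∀ e ∈ T, IsPolygonDiagonal M e := fun e he => isDiagonal_range_iff.mp (hT.1.1 e he)
  rw [apex, Nat.findGreatest_eq_iff]
  constructor
  · rintro ⟨-, hPv, hmax⟩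
    have hPv := hPv (by omega)
    refine ⟨hPv, ?_⟩
    -- a diagonal of `T` crossing `(v, M - 1)` is either `(0, y)` with `y > v` or crosses `(0, v)`
    by_contra! h
    have hvd : IsDiagonal (range M) (v, M - 1) := by
      rw [isDiagonal_range_iff, IsPolygonDiagonal]; omega
    obtain ⟨⟨x, y⟩, he, hcross⟩ := hT.exists_diagonalsCross hvd h.2
    have hxy := hdiag _ he
    simp only [DiagonalsCross, IsPolygonDiagonal] at hcross hxy
    rcases Nat.eq_zero_or_pos x with rfl | hx
    · exact hmax (by omega : v < y) (by omega) (Or.inr he)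
    · refine hT.1.2 _ (hPv.resolve_left (by omega)) _ he ?_
      simp only [DiagonalsCross]; omega
  · rintro ⟨hPv, hvM'⟩
    refine ⟨hvM, fun _ => hPv, fun w hvw hwM hw => ?_⟩
    rcases hw with rfl | hw
    · omega
    rcases hvM' with rfl | hvM'
    · omega
    exact hT.1.2 _ hw _ hvM' (by simp only [DiagonalsCross]; omega)

lemma card_filter_mem_and_mem {M v : ℕ} (hv : 2 ≤ v) (hvM : v + 3 ≤ M) :
    ((triangulations (range M) fun _ => True).filter fun T => (0, v) ∈ T ∧ (v, M - 1) ∈ T).card =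
      numTriangulations (v + 1) * numTriangulations (M - v) := by
  have hd : IsDiagonal (range M) (0, v) := by
    rw [isDiagonal_range_iff, IsPolygonDiagonal]; omega
  have hS : outer (range M) 0 v = insert 0 (Icc v (M - 1)) := by
    ext; simp [outer]; omega
  have hd' : IsDiagonal (insert 0 (Icc v (M - 1))) (v, M - 1) :=
    ⟨by simp; omega, by simp; omega, by omega, ⟨v + 1, by simp; omega, by omega, by omega⟩,
      ⟨0, by simp, by omega⟩⟩
  rw [filter_triangulations_congr (q := fun T => (0, v) ∈ T ∧ (v, M - 1) ∈ outerDiags 0 v T)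
      fun T _ => by simp [mem_outerDiags, show M - 1 ≠ v by omega, show v + 1 < M by omega],
    hd.card_triangulations_filter_mem_and trivial fun T => (v, M - 1) ∈ T, hS,
    hd'.card_triangulations_filter_mem trivial, inner_range (by omega),
    show inner (insert 0 (Icc v (M - 1))) v (M - 1) = Icc v (M - 1) by ext; simp [inner]; omega,
    show outer (insert 0 (Icc v (M - 1))) v (M - 1) = {0, v, M - 1} by ext; simp [outer]; omega,
    card_triangulations_Icc_true _ _ (by omega), card_triangulations_Icc_true _ _ (by omega),
    card_triangulations_of_card_le_three _ card_le_three, mul_one, Nat.sub_zero,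
    show M - 1 + 1 - v = M - v by omega]

lemma card_filter_apex_eq {M v : ℕ} (hM : 4 ≤ M) (hv : 1 ≤ v) (hvM : v ≤ M - 2) :
    ((triangulations (range M) fun _ => True).filter fun T => apex M T = v).card =
      numTriangulations (v + 1) * numTriangulations (M - v) := by
  have h3 : numTriangulations 3 = 1 := numTriangulations_of_le_three le_rfl
  rcases eq_or_lt_of_le hv with rfl | hv
  · have hd : IsDiagonal (range M) (1, M - 1) := by
      rw [isDiagonal_range_iff, IsPolygonDiagonal]; omega
    rw [filter_triangulations_congr (q := fun T => (1, M - 1) ∈ T) fun T hT => by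
        simp [apex_eq_iff hT le_rfl hvM, show 1 ≠ M - 2 by omega],
      hd.card_triangulations_filter_mem trivial, inner_range (by omega),
      card_triangulations_Icc_true _ _ (by omega),
      card_triangulations_outer_range (by omega) (by omega), show M + 1 + 1 - (M - 1) = 3 by omega,
      h3, mul_one, show M - 1 + 1 - 1 = M - 1 by omega,
      numTriangulations_of_le_three (by norm_num : 1 + 1 ≤ 3), one_mul]
  rcases eq_or_lt_of_le hvM with rfl | hvM
  · have hd : IsDiagonal (range M) (0, M - 2) := by
      rw [isDiagonal_range_iff, IsPolygonDiagonal]; omega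
    rw [filter_triangulations_congr (q := fun T => (0, M - 2) ∈ T) fun T hT => by
        simp [apex_eq_iff hT (by omega) le_rfl, show M - 2 ≠ 1 by omega],
      hd.card_triangulations_filter_mem trivial, inner_range (by omega),
      card_triangulations_Icc_true _ _ (by omega),
      card_triangulations_outer_range (by omega) (by omega), show M + 0 + 1 - (M - 2) = 3 by omega,
      show M - (M - 2) = 2 by omega, h3, numTriangulations_of_le_three (by norm_num : 2 ≤ 3),
      Nat.sub_zero]
  · rw [filter_triangulations_congr (q := fun T => (0, v) ∈ T ∧ (v, M - 1) ∈ T) fun T hT => by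
        simp [apex_eq_iff hT (by omega) (by omega), show v ≠ 1 by omega,
          show v ≠ M - 2 by omega],
      card_filter_mem_and_mem (by omega) (by omega)]

lemma numTriangulations_eq_sum {M : ℕ} (hM : 4 ≤ M) :
    numTriangulations M =
      ∑ v ∈ Icc 1 (M - 2), numTriangulations (v + 1) * numTriangulations (M - v) := by
  rw [numTriangulations, card_eq_sum_card_fiberwise (f := apex M) (t := Icc 1 (M - 2))]
  · exact sum_congr rfl fun v hv => card_filter_apex_eq hM (mem_Icc.mp hv).1 (mem_Icc.mp hv).2
  · intro T _
    simp only [coe_Icc, Set.mem_Icc]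
    exact ⟨Nat.le_findGreatest (by omega) (Or.inl rfl), Nat.findGreatest_le _⟩

theorem numTriangulations_add_two (p : ℕ) : numTriangulations (p + 2) = catalan p := by
  induction p using Nat.strong_induction_on with
  | _ p ih =>
  rcases p with _ | _ | q
  · rw [numTriangulations_of_le_three (by norm_num : 0 + 2 ≤ 3), catalan_zero]
  · rw [numTriangulations_of_le_three (by norm_num : 0 + 1 + 2 ≤ 3), catalan_one]
  rw [numTriangulations_eq_sum (by omega), catalan_succ_eq_sum_range,
    show q + 1 + 1 + 2 - 2 = q + 2 by omega, ← Ico_add_one_right_eq_Icc, sum_Ico_eq_sum_range]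
  refine sum_congr rfl fun i hi => ?_
  rw [mem_range] at hi
  rw [add_comm 1 i, ih i (by omega), show q + 1 + 1 + 2 - (i + 1) = q + 1 - i + 2 by omega,
    ih (q + 1 - i) (by omega)]

end Catalan

section Parallel

/-- Triangulations of the `(2k+1)`-gon without diagonals parallel to the side `(0, 1)`: for a
diagonal, `x + y ≡ 1 (mod 2k + 1)` means `x + y = 2k + 2`. -/
noncomputable def numAvoiding (k : ℕ) : ℕ :=
  (triangulations (range (2 * k + 1)) fun e => e.1 + e.2 ≠ 2 * k + 2).card

lemma card_triangulations_sum_ne_two_mul (m : ℕ) :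
    (triangulations (range (2 * m + 1)) fun e => e.1 + e.2 ≠ 2 * m).card = numAvoiding m := by
  rw [numAvoiding, ← card_triangulations_reflect]
  congr 1
  refine triangulations_congr fun e he => ?_
  rw [isDiagonal_range_iff, IsPolygonDiagonal] at he
  unfold reflect
  split_ifs <;> dsimp only <;> omega

/-- The innermost of the nested diagonals `(j, 2n + 2 - j)` of `T`, or `1` if there is none. -/
def innermost (n : ℕ) (T : Finset (ℕ × ℕ)) : ℕ :=
  Nat.findGreatest (fun j => j = 1 ∨ (j, 2 * n + 2 - j) ∈ T) n

lemma innermost_eq_iff {n j : ℕ} {T : Finset (ℕ × ℕ)}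
    (hT : IsTriangulationOn (range (2 * n + 1)) T) (hj : 1 ≤ j) (hjn : j ≤ n) :
    innermost n T = j ↔
      (j = 1 ∨ (j, 2 * n + 2 - j) ∈ T) ∧ ∀ e ∈ T, e.1 + e.2 = 2 * n + 2 → e.1 ≤ j := by
  rw [innermost, Nat.findGreatest_eq_iff]
  refine ⟨fun ⟨_, hj', hmax⟩ => ⟨hj' (by omega), fun e he hsum => ?_⟩,
    fun ⟨hj', hmax⟩ => ⟨hjn, fun _ => hj', fun j' hjj' hj'n hj' => ?_⟩⟩
  · have he' := isDiagonal_range_iff.mp (hT.1.1 e he)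
    unfold IsPolygonDiagonal at he'
    by_contra! h
    refine hmax h (by omega) (Or.inr ?_)
    convert he using 1
    exact Prod.ext rfl (by dsimp only; omega)
  · rcases hj' with rfl | hj'
    · omega
    have := hmax _ hj'
    dsimp only at this
    omega

lemma card_filter_innermost_eq_one {n : ℕ} (hn : 1 ≤ n) :
    ((triangulations (range (2 * n + 1)) fun _ => True).filter fun T => innermost n T = 1).card =
      numAvoiding n := by
  rw [numAvoiding]
  congr 1
  ext T
  simp only [mem_filter, mem_triangulations]
  constructor
  · rintro ⟨⟨hT, -⟩, h⟩
    refine ⟨hT, fun e he hsum => ?_⟩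
    have := ((innermost_eq_iff hT le_rfl hn).mp h).2 e he hsum
    have := isDiagonal_range_iff.mp (hT.1.1 e he)
    unfold IsPolygonDiagonal at this
    omega
  · rintro ⟨hT, hP⟩
    exact ⟨⟨hT, fun _ _ => trivial⟩, (innermost_eq_iff hT le_rfl hn).mpr
      ⟨Or.inl rfl, fun e he hsum => absurd hsum (hP e he)⟩⟩

lemma card_triangulations_outer_parallel {n j : ℕ} (hj : 2 ≤ j) (hjn : j ≤ n) :
    (triangulations (outer (range (2 * n + 1)) j (2 * n + 2 - j))
      fun e => e.1 + e.2 = 2 * n + 2 → e.1 ≤ j).card = catalan (2 * j - 2) := by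
  rw [triangulations_congr (Q := fun _ => True) fun e he => ?_,
    card_triangulations_outer_range (by omega) (by omega),
    show 2 * n + 1 + j + 1 - (2 * n + 2 - j) = 2 * j - 2 + 2 by omega, numTriangulations_add_two]
  have := he.of_outer.1
  have := he.2.2.1
  simp only [iff_true]
  omega

/-- Shifted by `j`, the parallel diagonals inside `(j, 2n + 2 - j)` become those with
`x + y = 2 (n + 1 - j)`, parallel to the side `(0, 2 (n + 1 - j))` rather than `(0, 1)`. -/
lemma card_triangulations_inner_parallel {n j : ℕ} (hj : 2 ≤ j) (hjn : j ≤ n) :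
    (triangulations (inner (range (2 * n + 1)) j (2 * n + 2 - j))
      fun e => e.1 + e.2 = 2 * n + 2 → e.1 ≤ j).card = numAvoiding (n + 1 - j) := by
  rw [inner_range (by omega), triangulations_congr
      (Q := fun e => (e.1 - j) + (e.2 - j) ≠ 2 * (n + 1 - j)) fun e he => ?_,
    card_triangulations_Icc _ _ (by omega) fun e => e.1 + e.2 ≠ 2 * (n + 1 - j),
    show 2 * n + 2 - j + 1 - j = 2 * (n + 1 - j) + 1 by omega,
    card_triangulations_sum_ne_two_mul]
  rw [isDiagonal_Icc_iff] at he
  omega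

lemma card_filter_innermost_eq {n j : ℕ} (hj : 2 ≤ j) (hjn : j ≤ n) :
    ((triangulations (range (2 * n + 1)) fun _ => True).filter fun T => innermost n T = j).card =
      catalan (2 * j - 2) * numAvoiding (n + 1 - j) := by
  have hd : IsDiagonal (range (2 * n + 1)) (j, 2 * n + 2 - j) := by
    rw [isDiagonal_range_iff, IsPolygonDiagonal]; omega
  have hfiber : ((triangulations (range (2 * n + 1)) fun _ => True).filter
      fun T => innermost n T = j) =
      (triangulations (range (2 * n + 1)) fun e => e.1 + e.2 = 2 * n + 2 → e.1 ≤ j).filter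
        fun T => (j, 2 * n + 2 - j) ∈ T := by
    ext T
    simp only [mem_filter, mem_triangulations]
    constructor
    · rintro ⟨⟨hT, -⟩, h⟩
      obtain ⟨hjT, hmax⟩ := (innermost_eq_iff hT (by omega) hjn).mp h
      exact ⟨⟨hT, hmax⟩, hjT.resolve_left (by omega)⟩
    · rintro ⟨⟨hT, hmax⟩, hjT⟩
      exact ⟨⟨hT, fun _ _ => trivial⟩,
        (innermost_eq_iff hT (by omega) hjn).mpr ⟨Or.inr hjT, hmax⟩⟩
  rw [hfiber, hd.card_triangulations_filter_mem (fun _ => le_rfl),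
    card_triangulations_outer_parallel hj hjn, card_triangulations_inner_parallel hj hjn, mul_comm]

lemma sum_mod_ne_one_iff {n : ℕ} {e : ℕ × ℕ} (he : IsPolygonDiagonal (2 * n + 1) e) :
    (e.1 + e.2) % (2 * n + 1) ≠ 1 ↔ e.1 + e.2 ≠ 2 * n + 2 := by
  unfold IsPolygonDiagonal at he
  rcases lt_or_ge (e.1 + e.2) (2 * n + 1) with h | h
  · rw [Nat.mod_eq_of_lt h]; omega
  · rw [Nat.mod_eq_sub_mod h, Nat.mod_eq_of_lt (by omega)]; omega

lemma ncard_setOf_isTriangulation (n : ℕ) :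
    {T : Finset (ℕ × ℕ) | IsTriangulation (2 * n + 1) T ∧
      ∀ e ∈ T, (e.1 + e.2) % (2 * n + 1) ≠ 1}.ncard = numAvoiding n := by
  rw [numAvoiding, ← Set.ncard_coe_finset]
  congr 1
  ext T
  simp only [Set.mem_ofPred_eq, mem_coe, mem_triangulations,
    ← isTriangulation_iff_isTriangulationOn]
  exact and_congr_right fun hT => forall₂_congr fun e he => sum_mod_ne_one_iff (hT.1 e he)

theorem sum_catalan_mul_numAvoiding (k : ℕ) :
    ∑ i ∈ range (k + 1), catalan (2 * i) * numAvoiding (k - i + 1) = catalan (2 * k + 1) := by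
  rw [← numTriangulations_add_two, show 2 * k + 1 + 2 = 2 * (k + 1) + 1 by ring, numTriangulations,
    card_eq_sum_card_fiberwise (f := innermost (k + 1)) (t := Icc 1 (k + 1)),
    ← Ico_add_one_right_eq_Icc, sum_Ico_eq_sum_range, Nat.add_sub_cancel]
  · refine sum_congr rfl fun i hi => ?_
    rw [mem_range] at hi
    rcases i with _ | i
    · rw [card_filter_innermost_eq_one (by omega), mul_zero, catalan_zero, one_mul, Nat.sub_zero]
    · rw [card_filter_innermost_eq (by omega) (by omega)]
      congr 2 <;> omega
  · intro T _
    simp only [coe_Icc, Set.mem_Icc]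
    exact ⟨Nat.le_findGreatest (by omega) (Or.inl rfl), Nat.findGreatest_le _⟩

end Parallel

end PolygonTriangulation

open PowerSeries

namespace CatalanParity

lemma catalan_two_mul_add_two (k : ℕ) :
    catalan (2 * k + 2) = 2 * ∑ i ∈ range (k + 1), catalan (2 * i) * catalan (2 * (k - i) + 1) := by
  have hodd : ∑ i ∈ range (k + 1), catalan (2 * i + 1) * catalan (2 * k + 1 - (2 * i + 1)) =
      ∑ i ∈ range (k + 1), catalan (2 * i) * catalan (2 * (k - i) + 1) := by
    rw [← sum_range_reflect]
    refine sum_congr rfl fun i hi => ?_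
    rw [mem_range] at hi
    rw [mul_comm, show 2 * k + 1 - (2 * (k + 1 - 1 - i) + 1) = 2 * i by omega,
      show k + 1 - 1 - i = k - i by omega]
  have heven : ∑ i ∈ range (k + 1), catalan (2 * i) * catalan (2 * k + 1 - 2 * i) =
      ∑ i ∈ range (k + 1), catalan (2 * i) * catalan (2 * (k - i) + 1) :=
    sum_congr rfl fun i hi => by
      rw [mem_range] at hi; rw [show 2 * k + 1 - 2 * i = 2 * (k - i) + 1 by omega]
  rw [catalan_succ_eq_sum_range, show 2 * k + 1 + 1 = 2 * (k + 1) by ring,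
    sum_range_two_mul (fun i => catalan i * catalan (2 * k + 1 - i)), sum_add_distrib, heven, hodd,
    ← two_mul]

lemma catalan_two_mul_add_one (k : ℕ) :
    catalan (2 * k + 1) = ∑ i ∈ range (k + 1), catalan (2 * i) * catalan (2 * (k - i)) +
      ∑ i ∈ range k, catalan (2 * i + 1) * catalan (2 * (k - 1 - i) + 1) := by
  have heven : ∑ i ∈ range k, catalan (2 * i) * catalan (2 * k - 2 * i) =
      ∑ i ∈ range k, catalan (2 * i) * catalan (2 * (k - i)) :=
    sum_congr rfl fun i hi => by
      rw [mem_range] at hi; rw [show 2 * k - 2 * i = 2 * (k - i) by omega]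
  have hodd : ∑ i ∈ range k, catalan (2 * i + 1) * catalan (2 * k - (2 * i + 1)) =
      ∑ i ∈ range k, catalan (2 * i + 1) * catalan (2 * (k - 1 - i) + 1) :=
    sum_congr rfl fun i hi => by
      rw [mem_range] at hi; rw [show 2 * k - (2 * i + 1) = 2 * (k - 1 - i) + 1 by omega]
  rw [catalan_succ_eq_sum_range, sum_range_succ,
    sum_range_two_mul (fun i => catalan i * catalan (2 * k - i)), sum_add_distrib, heven, hodd,
    sum_range_succ]
  simp only [Nat.sub_self, Nat.mul_zero]
  ring

noncomputable def evenSeries : ℤ⟦X⟧ := mk fun k => (catalan (2 * k) : ℤ)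

noncomputable def oddSeries : ℤ⟦X⟧ := mk fun k => (catalan (2 * k + 1) : ℤ)

lemma coeff_mk_mul_mk (f g : ℕ → ℤ) (n : ℕ) :
    coeff n (mk f * mk g) = ∑ i ∈ range (n + 1), f i * g (n - i) := by
  rw [coeff_mul, Nat.sum_antidiagonal_eq_sum_range_succ_mk]
  simp only [coeff_mk]

lemma evenSeries_eq : evenSeries = 1 + 2 * X * (evenSeries * oddSeries) := by
  ext (_ | k)
  · simp [evenSeries]
  · rw [map_add, coeff_one, if_neg k.succ_ne_zero, zero_add, mul_assoc, ← map_ofNat C 2,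
      coeff_C_mul, coeff_succ_X_mul, evenSeries, oddSeries, coeff_mk_mul_mk, coeff_mk,
      show 2 * (k + 1) = 2 * k + 2 by ring, catalan_two_mul_add_two]
    push_cast
    rfl

lemma oddSeries_eq : oddSeries = evenSeries ^ 2 + X * oddSeries ^ 2 := by
  ext (_ | k)
  · simp [evenSeries, oddSeries, sq]
  · rw [map_add, coeff_succ_X_mul, sq, sq, evenSeries, oddSeries, coeff_mk_mul_mk, coeff_mk_mul_mk,
      coeff_mk, catalan_two_mul_add_one]
    push_cast
    rfl

lemma oddSeries_add_evenSeries_mul_oddSeries :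
    oddSeries + evenSeries * oddSeries = 2 * evenSeries ^ 3 := by
  linear_combination 2 * evenSeries * oddSeries_eq - oddSeries * evenSeries_eq

lemma evenSeries_sq_eq : evenSeries ^ 2 = 1 + 4 * X * (evenSeries ^ 2) ^ 2 := by
  linear_combination (evenSeries + 1) * evenSeries_eq +
    2 * X * evenSeries * oddSeries_add_evenSeries_mul_oddSeries

noncomputable def scaledCatalanSeries : ℤ⟦X⟧ := rescale 4 (catalanSeries.map (Nat.castRingHom ℤ))

lemma coeff_scaledCatalanSeries (k : ℕ) : coeff k scaledCatalanSeries = 4 ^ k * catalan k := by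
  simp [scaledCatalanSeries, coeff_rescale]

lemma scaledCatalanSeries_eq : scaledCatalanSeries = 1 + 4 * X * scaledCatalanSeries ^ 2 := by
  have h := congrArg (fun f => rescale (4 : ℤ) (f.map (Nat.castRingHom ℤ)))
    catalanSeries_sq_mul_X_add_one
  simp only [map_add, map_mul, map_pow, map_X, map_one, rescale_X] at h
  rw [scaledCatalanSeries, ← map_ofNat C 4]
  linear_combination -h

lemma eq_of_eq_one_add_four_mul_X_mul_sq {A B : ℤ⟦X⟧} (hA : A = 1 + 4 * X * A ^ 2)
    (hB : B = 1 + 4 * X * B ^ 2) : A = B := by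
  have hunit : (1 - 4 * X * (A + B) : ℤ⟦X⟧) ≠ 0 := fun h => by
    simpa using congrArg constantCoeff h
  have h : (A - B) * (1 - 4 * X * (A + B)) = 0 := by linear_combination hA - hB
  exact sub_eq_zero.mp ((mul_eq_zero.mp h).resolve_right hunit)

lemma scaledCatalanSeries_eq_evenSeries_sq : scaledCatalanSeries = evenSeries ^ 2 :=
  eq_of_eq_one_add_four_mul_X_mul_sq scaledCatalanSeries_eq evenSeries_sq_eq

theorem eq_two_mul_scaledCatalanSeries_sub_oddSeries {a : ℤ⟦X⟧}
    (ha : evenSeries * a = oddSeries) : a = 2 * scaledCatalanSeries - oddSeries := by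
  have hne : evenSeries ≠ 0 := fun h => by simpa [evenSeries] using congrArg (coeff 0) h
  refine mul_left_cancel₀ hne ?_
  rw [ha, scaledCatalanSeries_eq_evenSeries_sq]
  linear_combination oddSeries_add_evenSeries_mul_oddSeries

end CatalanParity

namespace PolygonTriangulation

open CatalanParity

theorem numAvoiding_succ (k : ℕ) :
    (numAvoiding (k + 1) : ℤ) = 2 * 4 ^ k * catalan k - catalan (2 * k + 1) := by
  have h := congrArg (coeff k) <| eq_two_mul_scaledCatalanSeries_sub_oddSeries
    (a := mk fun k => (numAvoiding (k + 1) : ℤ)) <| by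
      ext k
      rw [evenSeries, coeff_mk_mul_mk, oddSeries, coeff_mk]
      exact_mod_cast sum_catalan_mul_numAvoiding k
  rw [coeff_mk, map_sub, ← map_ofNat C 2, coeff_C_mul, coeff_scaledCatalanSeries, oddSeries,
    coeff_mk] at h
  rw [h, mul_assoc]

end PolygonTriangulation

open PolygonTriangulation

theorem count_triangulations_avoiding_parallel_to_01_odd (n : ℕ) (hn : 1 ≤ n) :
    ({T : Finset (ℕ × ℕ) | IsTriangulation (2 * n + 1) T ∧
        ∀ e ∈ T, (e.1 + e.2) % (2 * n + 1) ≠ 1}.ncard : ℤ) =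
      2 ^ (2 * n - 1) * catalan (n - 1) - catalan (2 * n - 1) := by
  obtain ⟨k, rfl⟩ : ∃ k, n = k + 1 := ⟨n - 1, by omega⟩
  rw [ncard_setOf_isTriangulation, numAvoiding_succ, show 2 * (k + 1) - 1 = 2 * k + 1 by omega,
    Nat.add_sub_cancel, pow_succ, pow_mul]
  ring
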